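/- If u is a neutral term, then a context C is maximal if and only if the context C[u []] is maximal. -/

import Mathlib

/-- Lambda terms with named variables (names are natural numbers),
    NOT quotiented by alpha-equivalence. -/
inductive Term : Type
  | var : ℕ → Term
  | lam : ℕ → Term → Term
  | app : Term → Term → Term
deriving DecidableEq

namespace Term

/-- Size of a term. -/
def size : Term → ℕ
  | var _ => 1
  | lam _ t => t.size + 1
  | app t u => t.size + u.size + 1

/-- Free variables. -/
def fv : Term → Finset ℕ
  | var x => {x}
  | lam x t => t.fv.erase x
  | app t u => t.fv ∪ u.fv

/-- Bound variables (names occurring in binders). -/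
def bv : Term → Finset ℕ
  | var _ => ∅
  | lam x t => insert x t.bv
  | app t u => t.bv ∪ u.bv

/-- All variable names occurring (free, bound, or in binders). -/
def allVars : Term → Finset ℕ
  | var x => {x}
  | lam x t => insert x t.allVars
  | app t u => t.allVars ∪ u.allVars

/-- The list of binder names, in order. -/
def bvList : Term → List ℕ
  | var _ => []
  | lam x t => x :: t.bvList
  | app t u => t.bvList ++ u.bvList

/-- A term is well-named when all bound names are pairwise distinct and
    distinct from the free names. -/
def WellNamed (t : Term) : Prop := t.bvList.Nodup ∧ ∀ x ∈ t.bvList, x ∉ t.fv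

def isLam : Term → Bool
  | lam _ _ => true
  | _ => false

def isVar : Term → Bool
  | var _ => true
  | _ => false

/-- The term contains a beta-redex. -/
def HasRedex : Term → Prop
  | var _ => False
  | lam _ t => HasRedex t
  | app t u => t.isLam = true ∨ HasRedex t ∨ HasRedex u

/-- Normal form: no beta-redex. -/
def IsNormal (t : Term) : Prop := ¬ HasRedex t

/-- Neutral: normal and not an abstraction. -/
def IsNeutral (t : Term) : Prop := IsNormal t ∧ t.isLam = false

/-- Renaming: capture-allowing replacement of the free occurrences of `y` by `z`. -/
def rename (y z : ℕ) : Term → Term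
  | var w => if w = y then var z else var w
  | lam w t => if w = y then lam w t else lam w (t.rename y z)
  | app t u => app (t.rename y z) (u.rename y z)

theorem size_rename (y z : ℕ) (t : Term) : (t.rename y z).size = t.size := by
  induction t with
  | var w => simp only [rename]; split <;> rfl
  | lam w t ih => simp only [rename]; split <;> simp [size, ih]
  | app t u iht ihu => simp [rename, size, iht, ihu]

/-- A name fresh for a given finite set of names. -/
def fresh (s : Finset ℕ) : ℕ := (s.sup id) + 1

/-- Capture-avoiding substitution `t[x := s]`: bound variables are renamed
    to avoid capture. -/
def subst (x : ℕ) (s : Term) : Term → Term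
  | var y => if y = x then s else var y
  | app t u => app (subst x s t) (subst x s u)
  | lam y t =>
      if y = x then lam y t
      else if y ∈ s.fv then
        let z := fresh (s.fv ∪ t.allVars ∪ {x})
        lam z (subst x s (t.rename y z))
      else lam y (subst x s t)
  termination_by t => t.size
  decreasing_by
    all_goals simp only [size, size_rename] <;> omega

/-- Grafting `t{x := s}`: capture-allowing substitution, replacing the free
    occurrences of `x` by `s` with no renaming. -/
def graft (x : ℕ) (s : Term) : Term → Term
  | var y => if y = x then s else var y
  | lam y t => if y = x then lam y t else lam y (graft x s t)
  | app t u => app (graft x s t) (graft x s u)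

end Term

open Term

/-- One-hole contexts. -/
inductive Ctx : Type
  | hole : Ctx
  | lam : ℕ → Ctx → Ctx
  | appL : Ctx → Term → Ctx
  | appR : Term → Ctx → Ctx

namespace Ctx

/-- Plugging a term in the hole of a context. -/
def plug : Ctx → Term → Term
  | hole, t => t
  | lam x C, t => .lam x (C.plug t)
  | appL C u, t => .app (C.plug t) u
  | appR u C, t => .app u (C.plug t)

/-- Plugging a context in the hole of a context. -/
def comp : Ctx → Ctx → Ctx
  | hole, D => D
  | lam x C, D => lam x (C.comp D)
  | appL C u, D => appL (C.comp D) u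
  | appR u C, D => appR u (C.comp D)

end Ctx

/-- Maximal contexts. -/
inductive MaxCtx : Ctx → Prop
  | hole : MaxCtx .hole
  | appL {C : Ctx} {t : Term} : MaxCtx C → (∀ x D, C ≠ .lam x D) → MaxCtx (.appL C t)
  | lam {x : ℕ} {C : Ctx} : MaxCtx C → MaxCtx (.lam x C)
  | gc {x : ℕ} {t : Term} {C : Ctx} : x ∉ t.fv → MaxCtx C → MaxCtx (.appR (.lam x t) C)
  | appR {t : Term} {C : Ctx} : IsNeutral t → MaxCtx C → MaxCtx (.appR t C)

/-- ApplicativeCtx context: of the form `D[[] u]`. -/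
def ApplicativeCtx (C : Ctx) : Prop := ∃ D u, C = Ctx.comp D (.appL .hole u)

/-- Root step of the maximal strategy: `(λx.t)s ↦ t[x:=s]` provided `x` is
    free in `t` or `s` is normal. -/
inductive RootMax : Term → Term → Prop
  | mk {x : ℕ} {t s : Term} : (x ∈ t.fv ∨ IsNormal s) →
      RootMax (.app (.lam x t) s) (subst x s t)

/-- The maximal beta-strategy: root steps in maximal contexts. -/
inductive MaxStep : Term → Term → Prop
  | mk {C : Ctx} {t s : Term} : MaxCtx C → RootMax t s → MaxStep (C.plug t) (C.plug s)

/-- `MaxSteps t s n`: a maximal-strategy derivation of length `n` from `t` to `s`. -/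
inductive MaxSteps : Term → Term → ℕ → Prop
  | refl (t : Term) : MaxSteps t t 0
  | step {t u s : Term} {n : ℕ} : MaxStep t u → MaxSteps u s n → MaxSteps t s (n + 1)

/-- Usefulness labels. -/
inductive Label : Type
  | abs : Label
  | neu : Label
  | red : ℕ → Label
deriving DecidableEq

/-- Global environments: lists of labeled entries `[x := t]^l`. -/
abbrev Env := List (ℕ × Label × Term)

/-- Unfolding of an environment on a code: sequential grafting of the entries. -/
def unfold (t : Term) : Env → Term
  | [] => t
  | (x, _, u) :: E => unfold (t.graft x u) E

/-- All variable names occurring anywhere in an environment. -/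
def Env.varsIn : Env → Finset ℕ
  | [] => ∅
  | (x, _, u) :: E => insert x (u.allVars ∪ Env.varsIn E)

/-- Environment lookup. -/
def Env.lookup : Env → ℕ → Option (Label × Term)
  | [], _ => none
  | (y, l, u) :: E, x => if y = x then some (l, u) else Env.lookup E x

/-- Frame items: variables, head argument contexts, erasing contexts. -/
inductive FrameItem : Type
  | fvar : ℕ → FrameItem
  | head : Term → List Term → FrameItem
  | era : ℕ → Term → List Term → FrameItem

abbrev Frame := List FrameItem

inductive Phase : Type
  | eval : Phase
  | back : Phase
deriving DecidableEq

/-- Machine states of the Checking AM and the Max MAM. -/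
structure State : Type where
  ph : Phase
  frame : Frame
  code : Term
  stack : List Term
  env : Env

/-- Decoding of a stack into a context. -/
def decodeStack : List Term → Ctx
  | [] => .hole
  | u :: π => (decodeStack π).comp (.appL .hole u)

/-- Decoding of a frame item into a context. -/
def FrameItem.decode : FrameItem → Ctx
  | .fvar x => .lam x .hole
  | .head t π => (decodeStack π).comp (.appR t .hole)
  | .era x t π => (decodeStack π).comp (.appR (.lam x t) .hole)

/-- Decoding of a frame into a context. -/
def decodeFrame : Frame → Ctx
  | [] => .hole
  | φ :: F => (decodeFrame F).comp φ.decode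

/-- Decoding of a machine state to a lambda term: plug the code into the
    context given by frame and stack, then unfold the environment. -/
def State.decode (s : State) : Term :=
  unfold (((decodeFrame s.frame).comp (decodeStack s.stack)).plug s.code) s.env

/-- Lookup condition of transition c3: the entry for `x` is useless. -/
def Useless (E : Env) (x : ℕ) (π : List Term) : Prop :=
  E.lookup x = none ∨ (∃ t, E.lookup x = some (.neu, t)) ∨
    (∃ t, E.lookup x = some (.abs, t) ∧ π = [])

/-- Commutative transitions of the Checking AM. -/
inductive ChkCStep : State → State → Prop
  | c1 {F t u π E} : ChkCStep ⟨.eval, F, .app t u, π, E⟩ ⟨.eval, F, t, u :: π, E⟩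
  | c7 {F x t u π E} : x ∉ t.fv →
      ChkCStep ⟨.eval, F, .lam x t, u :: π, E⟩ ⟨.eval, .era x t π :: F, u, [], E⟩
  | c2 {F x t E} : ChkCStep ⟨.eval, F, .lam x t, [], E⟩ ⟨.eval, .fvar x :: F, t, [], E⟩
  | c3 {F x π E} : Useless E x π →
      ChkCStep ⟨.eval, F, .var x, π, E⟩ ⟨.back, F, .var x, π, E⟩
  | c4 {F x t E} : ChkCStep ⟨.back, .fvar x :: F, t, [], E⟩ ⟨.back, F, .lam x t, [], E⟩
  | c5 {F t π u E} : ChkCStep ⟨.back, .head t π :: F, u, [], E⟩ ⟨.back, F, .app t u, π, E⟩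
  | c6 {F t u π E} : ChkCStep ⟨.back, F, t, u :: π, E⟩ ⟨.eval, .head t π :: F, u, [], E⟩

/-- Output transitions of the Checking AM. -/
inductive ChkOut : State → Label → Prop
  | o1 {F x t u π E} : x ∈ t.fv → ChkOut ⟨.eval, F, .lam x t, u :: π, E⟩ (.red 1)
  | o2 {F x π E n t} : E.lookup x = some (.red n, t) →
      ChkOut ⟨.eval, F, .var x, π, E⟩ (.red (n + 1))
  | o3 {F x u π E t} : E.lookup x = some (.abs, t) →
      ChkOut ⟨.eval, F, .var x, u :: π, E⟩ (.red 2)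
  | o6 {F x t π u E} : ChkOut ⟨.back, .era x t π :: F, u, [], E⟩ (.red 1)
  | o4 {t u E} : ChkOut ⟨.back, [], .app t u, [], E⟩ .neu
  | o5 {x t E} : ChkOut ⟨.back, [], .lam x t, [], E⟩ .abs

/-- `ChkSteps s s' n`: `n` commutative Checking AM transitions from `s` to `s'`. -/
inductive ChkSteps : State → State → ℕ → Prop
  | refl (s : State) : ChkSteps s s 0
  | step {s₁ s₂ s₃ : State} {n : ℕ} : ChkCStep s₁ s₂ → ChkSteps s₂ s₃ n →
      ChkSteps s₁ s₃ (n + 1)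

/-- The initial state of the Checking AM on code `t` and environment `E`. -/
def initChk (t : Term) (E : Env) : State := ⟨.eval, [], t, [], E⟩

/-- The Checking AM executed on `t` and `E` outputs the label `l`. -/
def ChkOutput (t : Term) (E : Env) (l : Label) : Prop :=
  ∃ s n, ChkSteps (initChk t E) s n ∧ ChkOut s l

/-- Multiplicative transitions of the Max MAM. -/
inductive MStep : State → State → Prop
  | m1 {F x t y π E} :
      MStep ⟨.eval, F, .lam x t, .var y :: π, E⟩ ⟨.eval, F, subst x (.var y) t, π, E⟩
  | m2 {F x t u π E l} : x ∈ t.fv → u.isVar = false → ChkOutput u E l →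
      MStep ⟨.eval, F, .lam x t, u :: π, E⟩ ⟨.eval, F, t, π, (x, l, u) :: E⟩
  | m3 {F x t π u E} :
      MStep ⟨.back, .era x t π :: F, u, [], E⟩ ⟨.eval, F, t, π, E⟩

/-- Exponential transitions of the Max MAM (copies of environment entries,
    taken up to renaming). -/
inductive EStep : State → State → Prop
  | ered {F x π E n t} : E.lookup x = some (.red n, t) →
      EStep ⟨.eval, F, .var x, π, E⟩ ⟨.eval, F, t, π, E⟩
  | eabs {F x u π E t} : E.lookup x = some (.abs, t) →
      EStep ⟨.eval, F, .var x, u :: π, E⟩ ⟨.eval, F, t, u :: π, E⟩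

/-- Commutative transitions of the Max MAM. -/
inductive CStep : State → State → Prop
  | c1 {F t u π E} : CStep ⟨.eval, F, .app t u, π, E⟩ ⟨.eval, F, t, u :: π, E⟩
  | c7 {F x t u π E} : x ∉ t.fv → u.isVar = false →
      CStep ⟨.eval, F, .lam x t, u :: π, E⟩ ⟨.eval, .era x t π :: F, u, [], E⟩
  | c2 {F x t E} : CStep ⟨.eval, F, .lam x t, [], E⟩ ⟨.eval, .fvar x :: F, t, [], E⟩
  | c3 {F x π E} : Useless E x π →
      CStep ⟨.eval, F, .var x, π, E⟩ ⟨.back, F, .var x, π, E⟩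
  | c4 {F x t E} : CStep ⟨.back, .fvar x :: F, t, [], E⟩ ⟨.back, F, .lam x t, [], E⟩
  | c5 {F t π u E} : CStep ⟨.back, .head t π :: F, u, [], E⟩ ⟨.back, F, .app t u, π, E⟩
  | c6 {F t u π E} : CStep ⟨.back, F, t, u :: π, E⟩ ⟨.eval, .head t π :: F, u, [], E⟩

/-- Any transition of the Max MAM. -/
def Step (s s' : State) : Prop := MStep s s' ∨ EStep s s' ∨ CStep s s'

/-- `Steps s s' n`: a Max MAM execution from `s` to `s'` containing exactly
    `n` multiplicative transitions. -/
inductive Steps : State → State → ℕ → Prop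
  | refl (s : State) : Steps s s 0
  | m {s₁ s₂ s₃ : State} {n : ℕ} : MStep s₁ s₂ → Steps s₂ s₃ n → Steps s₁ s₃ (n + 1)
  | e {s₁ s₂ s₃ : State} {n : ℕ} : EStep s₁ s₂ → Steps s₂ s₃ n → Steps s₁ s₃ n
  | c {s₁ s₂ s₃ : State} {n : ℕ} : CStep s₁ s₂ → Steps s₂ s₃ n → Steps s₁ s₃ n

/-- Initial Max MAM state of code `t`. -/
def initState (t : Term) : State := ⟨.eval, [], t, [], []⟩

/-- Final state: no transition applies. -/
def Final (s : State) : Prop := ∀ s', ¬ Step s s'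

/-- A state reachable from some initial state. -/
def Reachable (s : State) : Prop := ∃ t n, WellNamed t ∧ Steps (initState t) s n

/-- Conditions on the label of a well-labeled environment entry. -/
def LabelOK : Label → Term → Env → Prop
  | .abs, t, E => t.isLam = true ∧ IsNormal t ∧
      (unfold t E).isLam = true ∧ IsNormal (unfold t E)
  | .neu, t, E => (∃ a b, t = .app a b) ∧ IsNeutral (unfold t E)
  | .red n, t, E => 1 ≤ n ∧ (∀ y, t ≠ .var y) ∧ HasRedex (unfold t E) ∧
      ∃ C u, MaxCtx C ∧ t = Ctx.plug C u ∧
        (n = 1 → ∃ s, RootMax u s) ∧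
        (1 < n → ∃ y E₁ l' t' E₂, u = .var y ∧ E = E₁ ++ (y, l', t') :: E₂ ∧
          (2 < n → l' = .red (n - 1)) ∧
          (n = 2 → l' = .red 1 ∨ (l' = .abs ∧ ApplicativeCtx C)))

/-- Well-labeled environments. -/
inductive WellLabeled : Env → Prop
  | nil : WellLabeled []
  | cons {x : ℕ} {l : Label} {t : Term} {E : Env} :
      WellLabeled E → x ∉ t.allVars → x ∉ Env.varsIn E → LabelOK l t E →
      WellLabeled ((x, l, t) :: E)

/-- Erasing all variable names (replacing them by a fixed name). -/
def Term.eraseNames : Term → Term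
  | .var _ => .var 0
  | .lam _ t => .lam 0 t.eraseNames
  | .app t u => .app t.eraseNames u.eraseNames

/-- Subterm relation (in the usual, literal sense). -/
inductive IsSubterm : Term → Term → Prop
  | refl (t : Term) : IsSubterm t t
  | lam {s t : Term} {x : ℕ} : IsSubterm s t → IsSubterm s (.lam x t)
  | appL {s t u : Term} : IsSubterm s t → IsSubterm s (.app t u)
  | appR {s t u : Term} : IsSubterm s u → IsSubterm s (.app t u)

/-- Subterm up to variable names. -/
def SubtermUpTo (s t : Term) : Prop := IsSubterm s.eraseNames t.eraseNames

theorem Ctx.comp_ne_lam {C E : Ctx} (hC : ∀ x D, C ≠ .lam x D) (hE : ∀ x D, E ≠ .lam x D) :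
    ∀ x D, C.comp E ≠ .lam x D := by
  cases C with
  | hole => exact hE
  | lam y C => exact absurd rfl (hC y C)
  | appL C t => exact fun _ _ => Ctx.noConfusion
  | appR t C => exact fun _ _ => Ctx.noConfusion

theorem MaxCtx.comp {C E : Ctx} (hC : MaxCtx C) (hE : MaxCtx E)
    (hE_ne_lam : ∀ x D, E ≠ .lam x D) : MaxCtx (C.comp E) := by
  induction hC with
  | hole => exact hE
  | appL _ hne ih => exact .appL ih (Ctx.comp_ne_lam hne hE_ne_lam)
  | lam _ ih => exact .lam ih
  | gc hx _ ih => exact .gc hx ih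
  | appR ht _ ih => exact .appR ht ih

theorem MaxCtx.of_comp {C E : Ctx} (h : MaxCtx (C.comp E)) : MaxCtx C := by
  induction C with
  | hole => exact .hole
  | lam x C ih =>
    cases h with
    | lam h => exact .lam (ih h)
  | appL C t ih =>
    cases h with
    | appL h hne =>
      refine .appL (ih h) ?_
      rintro x D rfl
      exact hne x (D.comp E) rfl
  | appR t C ih =>
    cases h with
    | gc hx h => exact .gc hx (ih h)
    | appR ht h => exact .appR ht (ih h)

/-- Left neutral extension: if `u` is neutral then `C` is maximal
    iff `C[u []]` is maximal. -/
theorem maxCtx_left_neutral_extension {u : Term} (hu : IsNeutral u) (C : Ctx) :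
    MaxCtx C ↔ MaxCtx (C.comp (.appR u .hole)) :=
  ⟨fun hC => hC.comp (.appR hu .hole) fun _ _ => Ctx.noConfusion, MaxCtx.of_comp⟩
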